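/- Let F be a complete discretely valued field, let g(T) ∈ O_F[T] be a separable monic Eisenstein polynomial, let α ∈ F^sep be a root of g, set E = F(α), and let d = v_E(g'(α)) be the E-valuation of the different of E/F. If π ∈ F^sep satisfies v_E(g(π)) > d, then g has a root β with v_E(π − β) ≥ v_E(g(π)) − d. -/

import Mathlib

open scoped LaurentSeries Multiplicative
noncomputable section

namespace FieldOfNormsPaper

abbrev Zm0 := WithZero (Multiplicative ℤ)
abbrev Qm0 := WithZero (Multiplicative ℚ)

def zToQ : Zm0 →*₀ Qm0 :=
  WithZero.map' (AddMonoidHom.toMultiplicative (Int.castAddHom ℚ))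

structure CDVF (F : Type) [Field F] where
  val : Valuation F Zm0
  isDiscrete : Function.Surjective val
  complete : @CompleteSpace F (Valued.mk' val).toUniformSpace

structure LocalFieldStr (k : Type) [Field k] (F : Type) [Field F] extends CDVF F where
  residIso : IsLocalRing.ResidueField val.valuationSubring ≃+* k

def LocalFieldStr.res {k F : Type} [Field k] [Field F] (S : LocalFieldStr k F)
    (x : F) (hx : S.val x ≤ 1) : k :=
  S.residIso (IsLocalRing.residue _ ⟨x, hx⟩)

def IsTotRam {F : Type} [Field F] (S : CDVF F) (L : Type) [Field L] [Algebra F L] : Prop :=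
  ∃ (g : Polynomial S.val.valuationSubring) (α : L),
    g.Monic ∧ g.IsEisensteinAt (IsLocalRing.maximalIdeal S.val.valuationSubring) ∧
    g.natDegree = Module.finrank F L ∧
    Polynomial.aeval α (g.map (algebraMap S.val.valuationSubring F)) = 0 ∧
    Algebra.adjoin F {α} = ⊤

structure AObj (p : ℕ) (k : Type) [Field k] where
  F : Type
  E : Type
  [fieldF : Field F]
  [fieldE : Field E]
  [alg : Algebra F E]
  base : LocalFieldStr k F
  valE : Valuation E Qm0
  val_comp : ∀ x : F, valE (algebraMap F E x) = zToQ (base.val x)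
  galois : IsGalois F E
  abelian : ∀ σ τ : E ≃ₐ[F] E, σ * τ = τ * σ
  totRam : ∀ L : IntermediateField F E, FiniteDimensional F L → IsTotRam base.toCDVF L
  infiniteIfCharZero : CharZero F → ¬ FiniteDimensional F E

attribute [instance] AObj.fieldF AObj.fieldE AObj.alg

abbrev K (k : Type) [Field k] := LaurentSeries k

variable (k : Type) [Field k]

def Tvar : K k := HahnSeries.single 1 1

def AutK : Subgroup ((K k) ≃ₐ[k] (K k)) where
  carrier := {σ | ∀ f : K k, Valued.v (σ f) = Valued.v f}
  one_mem' := fun _ => rfl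
  mul_mem' := by
    intro a b ha hb f
    have : (a * b) f = a (b f) := rfl
    rw [this, ha, hb]
  inv_mem' := by
    intro a ha f
    have : a (a⁻¹ f) = f := by
      have : a⁻¹ f = a.symm f := rfl
      rw [this]; exact a.apply_symm_apply f
    conv_rhs => rw [← this]
    rw [ha]

instance autKTop : TopologicalSpace (AutK k) :=
  TopologicalSpace.induced (fun σ => ((σ : (K k) ≃ₐ[k] (K k)) : K k → K k)) inferInstance

structure BObj where
  A : Subgroup (AutK k)
  abelian : ∀ σ τ : A, σ * τ = τ * σ
  closed : IsClosed (A : Set (AutK k))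

/-- `Sset` is a set of representatives for the cosets of `H'` in `H`. -/
def IsTransversal {G : Type} [Group G] (H H' : Subgroup G) (Sset : Finset G) : Prop :=
  (∀ s ∈ Sset, s ∈ H) ∧ ∀ τ ∈ H, ∃! s, s ∈ Sset ∧ s⁻¹ * τ ∈ H'

/-- `π` is a uniformizer of the subextension `L` with respect to the valuation `w`:
it has the largest value `< 1` among elements of `L`. -/
def IsUnifOf {F E : Type} [Field F] [Field E] [Algebra F E] (w : Valuation E Qm0)
    (L : IntermediateField F E) (π : E) : Prop :=
  π ∈ L ∧ w π ≠ 0 ∧ w π < 1 ∧ ∀ y ∈ L, w y < 1 → w y ≠ 0 → w y ≤ w π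

/-- An identification of the field of norms `X_F(E)` of a totally ramified abelian
extension `E/F` with `k((T))`.  An element `x` of `k((T))` corresponds to the
norm-compatible sequence `(comp x L)_L`, indexed by the finite subextensions `L` of
`E/F`; multiplication is componentwise, addition of integral elements is given by
the limit of the norms of the sums of the components, the distinguished uniformizer
`T` corresponds to a norm-compatible sequence of uniformizers, the Galois group acts
through `act`, and the residue field `k` is embedded via compatible `p`-power roots
of Teichmüller lifts. -/
structure NormField (k : Type) [Field k] (F E : Type) [Field F] [Field E] [Algebra F E]
    (S : LocalFieldStr k F) (w : Valuation E Qm0) where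
  /-- the component in `L` of an element of `k((T)) ≅ X_F(E)` -/
  comp : K k → IntermediateField F E → E
  comp_mem : ∀ x L, comp x L ∈ L
  comp_one : ∀ L, comp 1 L = 1
  comp_zero : ∀ L, comp 0 L = 0
  /-- multiplication is componentwise -/
  comp_mul : ∀ x y L, comp (x * y) L = comp x L * comp y L
  /-- the components form norm-compatible sequences:  the norm from `L'` to `L`
  (the product over a transversal of `Gal(E/L')` in `Gal(E/L)`) of the `L'`-component
  is the `L`-component -/
  comp_norm : ∀ (x : K k) (L L' : IntermediateField F E), L ≤ L' →
      FiniteDimensional F L' → ∀ Sset : Finset (E ≃ₐ[F] E),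
      IsTransversal L.fixingSubgroup L'.fixingSubgroup Sset →
      (∏ s ∈ Sset, s (comp x L')) = comp x L
  /-- an element of `X_F(E)` is determined by its components -/
  comp_inj : ∀ x y : K k, (∀ L : IntermediateField F E, FiniteDimensional F L → comp x L = comp y L) → x = y
  /-- every integral norm-compatible sequence arises from an element -/
  comp_surj : ∀ c : IntermediateField F E → E,
      (∀ L : IntermediateField F E, FiniteDimensional F L → c L ∈ L ∧ w (c L) ≤ 1) →
      (∀ (L L' : IntermediateField F E), L ≤ L' → FiniteDimensional F L' →
        ∀ Sset : Finset (E ≃ₐ[F] E),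
        IsTransversal L.fixingSubgroup L'.fixingSubgroup Sset →
        (∏ s ∈ Sset, s (c L')) = c L) →
      ∃ x : K k, Valued.v x ≤ (1 : Zm0) ∧ ∀ L : IntermediateField F E, FiniteDimensional F L → comp x L = c L
  /-- addition: the `L`-component of `x + y` is the limit over `L'` of the norms of
  the sums of the `L'`-components of `x` and `y` -/
  comp_add : ∀ x y : K k, Valued.v x ≤ (1 : Zm0) → Valued.v y ≤ (1 : Zm0) →
      ∀ L : IntermediateField F E, FiniteDimensional F L → ∀ N : ℕ,
      ∃ L₀ : IntermediateField F E, FiniteDimensional F L₀ ∧ L ≤ L₀ ∧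
        ∀ L' : IntermediateField F E, FiniteDimensional F L' → L₀ ≤ L' →
        ∀ Sset : Finset (E ≃ₐ[F] E),
        IsTransversal L.fixingSubgroup L'.fixingSubgroup Sset →
        w (comp (x + y) L - ∏ s ∈ Sset, s (comp x L' + comp y L'))
          ≤ (w (comp (Tvar k) L)) ^ N
  /-- the distinguished uniformizer `T` of `k((T))` corresponds to a compatible
  sequence of uniformizers of the finite subextensions -/
  unif : ∀ L : IntermediateField F E, FiniteDimensional F L → IsUnifOf w L (comp (Tvar k) L)
  /-- the action of `Gal(E/F)` on `X_F(E) ≅ k((T))` -/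
  act : (E ≃ₐ[F] E) →* AutK k
  /-- the action is induced by the action on the components -/
  act_compat : ∀ (σ : E ≃ₐ[F] E) (x : K k) (L : IntermediateField F E), FiniteDimensional F L →
      comp (((act σ : AutK k) : (K k) ≃ₐ[k] (K k)) x) L = σ (comp x L)
  act_inj : Function.Injective act
  act_range_closed : IsClosed ((act.range : Subgroup (AutK k)) : Set (AutK k))
  /-- the embedding of `k` in `X_F(E)` is by compatible `p`-power roots of
  Teichmüller lifts: the `L`-component of (the element corresponding to) `ζ ∈ k`,
  raised to the power `p^a` with `a = v_p([L:F])`, reduces to `ζ` in the residue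
  field -/
  teich : ∀ ζ : k, ∀ L : IntermediateField F E, FiniteDimensional F L → ∀ c : F, ∀ hc : S.val c ≤ 1,
      S.res c hc = ζ →
      w ((comp (algebraMap k (K k) ζ) L) ^
          ((ringChar k) ^ ((Module.finrank F L).factorization (ringChar k))) -
        algebraMap F E c) < 1

/-- The field-of-norms data attached to an object of `𝒜`. -/
abbrev ANorm {p : ℕ} {k : Type} [Field k] (a : AObj p k) : Type :=
  NormField k a.F a.E a.base a.valE

/-- The object `ℱ(E/F) = (X_F(E), Gal(E/F))` of `ℬ` attached to an object of `𝒜`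
with field-of-norms data. -/
def toBObj {p : ℕ} {k : Type} [Field k] (a : AObj p k) (n : ANorm a) : BObj k where
  A := n.act.range
  abelian := by
    rintro ⟨x, hx⟩ ⟨y, hy⟩
    obtain ⟨s, rfl⟩ := hx
    obtain ⟨t, rfl⟩ := hy
    refine Subtype.ext ?_
    show n.act s * n.act t = n.act t * n.act s
    rw [← map_mul, ← map_mul, a.abelian]
  closed := n.act_range_closed

/-- The lower ramification subgroup `Γ[x]` of `Γ = Aut_k(K)` for `x : ℝ`:
the set of `σ ∈ Aut_k(K)` with `v_K(σ(T) - T) ≥ x + 1`. -/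
def ramGroup (x : ℝ) : Subgroup (AutK k) where
  carrier := {σ | Valued.v (((σ : (K k) ≃ₐ[k] (K k)) (Tvar k)) - Tvar k)
      ≤ ((Multiplicative.ofAdd (-(⌈x⌉ + 1)) : Multiplicative ℤ) : Zm0)}
  one_mem' := by
    simp only [Set.mem_setOf_eq, OneMemClass.coe_one, AlgEquiv.one_apply, sub_self, map_zero]
    exact zero_le'
  mul_mem' := by
    intro a b ha hb
    simp only [Set.mem_setOf_eq] at *
    have hab : ((a * b : AutK k) : (K k) ≃ₐ[k] (K k)) (Tvar k)
        = (a : (K k) ≃ₐ[k] (K k)) ((b : (K k) ≃ₐ[k] (K k)) (Tvar k)) := rfl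
    rw [hab]
    have key : (a : (K k) ≃ₐ[k] (K k)) ((b : (K k) ≃ₐ[k] (K k)) (Tvar k)) - Tvar k
        = (a : (K k) ≃ₐ[k] (K k)) ((b : (K k) ≃ₐ[k] (K k)) (Tvar k) - Tvar k)
          + ((a : (K k) ≃ₐ[k] (K k)) (Tvar k) - Tvar k) := by
      rw [map_sub]; ring
    rw [key]
    refine le_trans (Valued.v.map_add _ _) (max_le ?_ ha)
    rw [a.2]; exact hb
  inv_mem' := by
    intro a ha
    simp only [Set.mem_setOf_eq] at *
    have h1 : (a : (K k) ≃ₐ[k] (K k)) ((a⁻¹ : AutK k).1 (Tvar k) - Tvar k)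
        = Tvar k - (a : (K k) ≃ₐ[k] (K k)) (Tvar k) := by
      rw [map_sub]
      congr 1
      exact (a : (K k) ≃ₐ[k] (K k)).apply_symm_apply (Tvar k)
    calc Valued.v ((a⁻¹ : AutK k).1 (Tvar k) - Tvar k)
        = Valued.v ((a : (K k) ≃ₐ[k] (K k)) ((a⁻¹ : AutK k).1 (Tvar k) - Tvar k)) := (a.2 _).symm
      _ = Valued.v (Tvar k - (a : (K k) ≃ₐ[k] (K k)) (Tvar k)) := by rw [h1]
      _ = Valued.v ((a : (K k) ≃ₐ[k] (K k)) (Tvar k) - Tvar k) := Valuation.map_sub_swap _ _ _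
      _ ≤ _ := ha

variable {k}

/-- A morphism of `ℬ` from `(K, A)` to `(K, A')` (where `K = k((T))`): a continuous
`k`-embedding `σ : K → K` such that `K` is finite separable over `σ(K)`, `A'`
stabilizes `σ(K)`, and the image of `A'` in `Aut_k(K)` is an open subgroup of `A`. -/
structure BMor (b b' : BObj k) where
  /-- the underlying continuous `k`-embedding -/
  σ : (K k) →ₐ[k] (K k)
  cont : Continuous σ
  /-- `K` is finite over `σ(K)` -/
  fin : (σ : (K k) →+* (K k)).Finite
  /-- `K` is separable over `σ(K)` -/
  sep : @Algebra.IsSeparable (K k) (K k) _ _ (σ : (K k) →+* (K k)).toAlgebra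
  /-- `A'` stabilizes `σ(K)` -/
  stab : ∀ γ : b'.A, ∀ x : K k, ∃ y : K k, ((γ : AutK k) : (K k) ≃ₐ[k] (K k)) (σ x) = σ y
  /-- the image of `A'` in `Aut_k(K)` is contained in `A` ... -/
  image_le : {τ : AutK k | ∃ γ ∈ b'.A, ∀ x : K k,
      ((γ : (K k) ≃ₐ[k] (K k)) (σ x)) = σ ((τ : (K k) ≃ₐ[k] (K k)) x)} ⊆ (b.A : Set (AutK k))
  /-- ... and is an open subgroup of `A` -/
  image_open : IsOpen (Subtype.val ⁻¹' {τ : AutK k | ∃ γ ∈ b'.A, ∀ x : K k,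
      ((γ : (K k) ≃ₐ[k] (K k)) (σ x)) = σ ((τ : (K k) ≃ₐ[k] (K k)) x)} : Set b.A)

/-- A morphism of `𝒜` from `E/F` to `E'/F'`: a continuous embedding `ρ : E → E'`
inducing the identity on the residue field `k`, mapping `F` into `F'`, such that
`E'/ρ(E)` and `F'/ρ(F)` are finite separable extensions. -/
structure AMor {p : ℕ} (a a' : AObj p k) where
  /-- the underlying embedding `E → E'` -/
  ρ : a.E →+* a'.E
  /-- the restriction `F → F'` of `ρ` to the base fields -/
  ρF : a.F →+* a'.F
  square : ∀ x : a.F, ρ (algebraMap a.F a.E x) = algebraMap a'.F a'.E (ρF x)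
  /-- `ρ` is continuous -/
  cont : @Continuous _ _ (Valued.mk' a.valE).toUniformSpace.toTopologicalSpace
      (Valued.mk' a'.valE).toUniformSpace.toTopologicalSpace ρ
  /-- `E'` is finite over `ρ(E)` -/
  finE : ρ.Finite
  /-- `E'` is separable over `ρ(E)` -/
  sepE : @Algebra.IsSeparable a.E a'.E _ _ ρ.toAlgebra
  /-- `F'` is finite over `ρ(F)` -/
  finF : ρF.Finite
  /-- `F'` is separable over `ρ(F)` -/
  sepF : @Algebra.IsSeparable a.F a'.F _ _ ρF.toAlgebra
  /-- `ρ` induces the identity on the residue field `k` -/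
  resk : ∀ x : a.F, ∀ hx : a.base.val x ≤ 1, ∃ hx' : a'.base.val (ρF x) ≤ 1,
      a'.base.res (ρF x) hx' = a.base.res x hx

/-- `s` is the `ℬ`-morphism induced by the `𝒜`-morphism `ρ` under the field of norms
functor, i.e. `s = ℱ(ρ)`:  for all sufficiently large finite subextensions `L` of
`E/F` there is a finite subextension `L'` of `E'/F'` with `ρ(L) ⊆ L'` such that the
`L'`-component of `s(x)` is `ρ` applied to the `L`-component of `x`. -/
def Induces {p : ℕ} {a a' : AObj p k} (na : ANorm a) (na' : ANorm a')
    (ρ : AMor a a') (s : BMor (toBObj a na) (toBObj a' na')) : Prop :=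
  ∃ M₀ : IntermediateField a.F a.E, FiniteDimensional a.F M₀ ∧
    ∀ L : IntermediateField a.F a.E, FiniteDimensional a.F L → M₀ ≤ L →
      ∃ L' : IntermediateField a'.F a'.E, FiniteDimensional a'.F L' ∧
        (∀ z ∈ L, ρ.ρ z ∈ L') ∧
        ∀ x : K k, na'.comp (s.σ x) L' = ρ.ρ (na.comp x L)

/-- Ramification filtrations (in the lower and upper numbering) on the Galois group
of an object `E/F` of `𝒜`.  The filtration is pinned down by the `anchor` axiom:
via Herbrand's theorem, the image of `G[x]` in the Galois group of a finite
subextension `L/F` is the concretely defined ramification subgroup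
`Gal(L/F)[φ_{E/L}(x)] = {σ : v_L(σ(π_L) - π_L) ≥ φ_{E/L}(x) + 1}`, where
`φ_{E/L}(x) = ∫_0^x dt / [Gal(E/L)[0] : Gal(E/L)[t]]`.  The upper numbering is
obtained from the lower numbering via the Hasse–Herbrand function
`φ_{E/F}(x) = ∫_0^x dt / [G[0] : G[t]]`, i.e. `G(φ_{E/F}(x)) = G[x]`. -/
structure LowerRamData {p : ℕ} (a : AObj p k) where
  /-- the ramification subgroups `G[x]` in the lower numbering -/
  low : ℝ → Subgroup (a.E ≃ₐ[a.F] a.E)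
  /-- `G[0] = G` (the extension is totally ramified) -/
  low_zero : low 0 = ⊤
  /-- the filtration is decreasing -/
  mono : ∀ x y : ℝ, 0 ≤ x → x ≤ y → low y ≤ low x
  /-- each `G[x]` has finite index (the extension is arithmetically profinite) -/
  finiteIndex : ∀ x : ℝ, (low x).index ≠ 0
  /-- Herbrand compatibility with the concrete filtration at finite levels -/
  anchor : ∀ L : IntermediateField a.F a.E, FiniteDimensional a.F L →
      ∀ x : ℝ, 0 ≤ x → ∀ σ : a.E ≃ₐ[a.F] a.E,
      (σ ∈ low x ⊔ L.fixingSubgroup ↔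
        ∀ π : a.E, IsUnifOf a.valE L π →
          a.valE (σ π - π) ≤ (a.valE π) ^
            (⌈∫ t in (0:ℝ)..x,
                (((L.fixingSubgroup ⊓ low t).relIndex L.fixingSubgroup : ℝ))⁻¹⌉ + 1))
  /-- the ramification subgroups `G(u)` in the upper numbering -/
  upr : ℝ → Subgroup (a.E ≃ₐ[a.F] a.E)
  /-- `G(φ_{E/F}(x)) = G[x]` -/
  upr_low : ∀ x : ℝ, 0 ≤ x →
      upr (∫ t in (0:ℝ)..x, (((low t).index : ℝ))⁻¹) = low x

/-- The subgroup `A` of `Aut_k(K)` is topologically finitely generated. -/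
def TopFG (b : BObj k) : Prop :=
  ∃ S : Finset (AutK k),
    (b.A : Set (AutK k)) ⊆ _root_.closure ((Subgroup.closure (S : Set (AutK k)) : Subgroup (AutK k)) : Set (AutK k))

/-!
Let `β` be a root of `g` nearest to `π`. For every other root `r` the ultrametric inequality
gives `w(β - r) ≤ w(π - r)`, so `w(g'(β)) = ∏_{r ≠ β} w(β - r) ≤ ∏_{r ≠ β} w(π - r)`, and
multiplying by `w(π - β)` turns the right side into `w(g(π))`. Since `g` is Eisenstein, it is
irreducible and `β` is conjugate to `α`; the valuation of the complete field `F` extends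
uniquely to the algebraic closure, so it is Galois invariant and `w(g'(β)) = w(g'(α))`.
-/

open scoped NNReal
open Polynomial

def qm0ToNNReal : Qm0 →*₀ ℝ≥0 :=
  WithZero.lift'
    { toFun q := (2 : ℝ≥0) ^ ((q.toAdd : ℚ) : ℝ)
      map_one' := by simp
      map_mul' a b := by simp [NNReal.rpow_add two_ne_zero] }

lemma qm0ToNNReal_strictMono : StrictMono qm0ToNNReal := by
  intro a b hab
  induction b using WithZero.recZeroCoe with
  | zero => exact absurd hab not_lt_zero
  | coe b =>
    induction a using WithZero.recZeroCoe with
    | zero => simp [qm0ToNNReal, NNReal.rpow_pos two_pos]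
    | coe a =>
      simp only [qm0ToNNReal, WithZero.lift'_coe, MonoidHom.coe_mk, OneHom.coe_mk]
      exact NNReal.rpow_lt_rpow_of_exponent_lt one_lt_two
        (by exact_mod_cast Multiplicative.toAdd_lt.mpr (WithZero.coe_lt_coe.mp hab))

lemma zToQ_strictMono : StrictMono zToQ :=
  WithZero.map'_strictMono fun a b h => by
    simpa [← Multiplicative.toAdd_lt] using h

def valuationAbv {L : Type} [Field L] (u : Valuation L Qm0) :
    AbsoluteValue L ℝ where
  toFun x := qm0ToNNReal (u x)
  map_mul' x y := by simp
  nonneg' x := by positivity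
  eq_zero' x := by
    rw [NNReal.coe_eq_zero, ← map_zero qm0ToNNReal, qm0ToNNReal_strictMono.injective.eq_iff,
      map_eq_zero]
  add_le' x y := by
    have h : qm0ToNNReal (u (x + y)) ≤ max (qm0ToNNReal (u x)) (qm0ToNNReal (u y)) := by
      rw [← qm0ToNNReal_strictMono.monotone.map_max]
      exact qm0ToNNReal_strictMono.monotone (u.map_add x y)
    exact_mod_cast h.trans (max_le_add_of_nonneg zero_le zero_le)

abbrev CDVF.rankOne {F : Type} [Field F] (S : CDVF F) : S.val.RankOne where
  hom' := (qm0ToNNReal.comp zToQ).comp MonoidWithZeroHom.ValueGroup₀.embedding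
  strictMono' := (qm0ToNNReal_strictMono.comp zToQ_strictMono).comp
    MonoidWithZeroHom.ValueGroup₀.embedding_strictMono
  exists_val_nontrivial := by
    obtain ⟨x, hx⟩ := S.isDiscrete ((Multiplicative.ofAdd (1 : ℤ) : Multiplicative ℤ) : Zm0)
    exact ⟨x, by simp [hx], by simp [hx, ← WithZero.coe_one]⟩

theorem CDVF.valuation_eq_of_extends {F L : Type} [Field F] [Field L] [Algebra F L]
    [Algebra.IsAlgebraic F L] (S : CDVF F) (w₁ w₂ : Valuation L Qm0)
    (hw₁ : ∀ x : F, w₁ (algebraMap F L x) = zToQ (S.val x))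
    (hw₂ : ∀ x : F, w₂ (algebraMap F L x) = zToQ (S.val x)) : w₁ = w₂ := by
  let : Valued F Zm0 := Valued.mk' S.val
  let : S.val.RankOne := S.rankOne
  let : NontriviallyNormedField F := Valued.toNontriviallyNormedField F Zm0
  have : CompleteSpace F := S.complete
  have hnorm : ∀ (w : Valuation L Qm0), (∀ x : F, w (algebraMap F L x) = zToQ (S.val x)) →
      ∀ x : F, valuationAbv w (algebraMap F L x) = ‖x‖ := by
    intro w hw x
    change (qm0ToNNReal (w (algebraMap F L x)) : ℝ) =
      qm0ToNNReal (zToQ (MonoidWithZeroHom.ValueGroup₀.embedding (S.val.restrict x)))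
    rw [Valuation.embedding_restrict, hw]
  ext x
  have h := (spectralNorm_unique_field_norm_ext (hnorm w₁ hw₁) x).trans
    (spectralNorm_unique_field_norm_ext (hnorm w₂ hw₂) x).symm
  exact qm0ToNNReal_strictMono.injective (NNReal.coe_injective h)

theorem CDVF.valuation_algEquiv_apply {F L : Type} [Field F] [Field L] [Algebra F L]
    [Algebra.IsAlgebraic F L] (S : CDVF F) (w : Valuation L Qm0)
    (hw : ∀ x : F, w (algebraMap F L x) = zToQ (S.val x)) (σ : L ≃ₐ[F] L) (x : L) :
    w (σ x) = w x := by
  have hσw : w.comap σ.toRingHom = w :=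
    S.valuation_eq_of_extends _ w (fun c => by simpa using hw c) hw
  exact DFunLike.congr_fun hσw x

theorem _root_.Polynomial.IsEisensteinAt.irreducible_map_valuationSubring {F : Type} [Field F]
    {A : ValuationSubring F} {g : A[X]} (hmon : g.Monic)
    (heis : g.IsEisensteinAt (IsLocalRing.maximalIdeal A)) (hdeg : 0 < g.natDegree) :
    Irreducible (g.map (algebraMap A F)) :=
  (hmon.irreducible_iff_irreducible_map_fraction_map).mp <|
    heis.irreducible (IsLocalRing.maximalIdeal.isMaximal A).isPrime hmon.isPrimitive hdeg

theorem _root_.Valuation.mul_eval_derivative_le_of_nearest_root {L Γ₀ : Type*} [Field L]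
    [LinearOrderedCommGroupWithZero Γ₀] (v : Valuation L Γ₀) {f : L[X]} (hf : f.Splits)
    (hm : f.Monic) {π β : L} (hβ : β ∈ f.roots)
    (hmin : ∀ r ∈ f.roots, v (π - β) ≤ v (π - r)) :
    v (π - β) * v (f.derivative.eval β) ≤ v (f.eval π) := by
  classical
  rw [hf.eval_root_derivative hm hβ, hf.eval_eq_prod_roots_of_monic hm,
    ← Multiset.prod_map_erase hβ, map_mul, map_multiset_prod, map_multiset_prod,
    Multiset.map_map, Multiset.map_map]
  refine mul_le_mul_right (Multiset.prod_map_le_prod_map _ _ fun r hr => ?_) _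
  have hsub : β - r = (π - r) - (π - β) := by ring
  calc v (β - r) ≤ max (v (π - r)) (v (π - β)) := hsub ▸ v.map_sub _ _
    _ = v (π - r) := max_eq_left (hmin r (Multiset.mem_of_mem_erase hr))

theorem statement_12_general
    (F : Type) [Field F] (S : CDVF F)
    (w : Valuation (AlgebraicClosure F) Qm0)
    (hw : ∀ x : F, w (algebraMap F (AlgebraicClosure F) x) = zToQ (S.val x))
    (g : Polynomial S.val.valuationSubring) (hmon : g.Monic)
    (heis : g.IsEisensteinAt (IsLocalRing.maximalIdeal S.val.valuationSubring))
    (α : AlgebraicClosure F)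
    (hα : Polynomial.aeval α (g.map (algebraMap S.val.valuationSubring F)) = 0)
    (π : AlgebraicClosure F) :
    ∃ β : AlgebraicClosure F,
      Polynomial.aeval β (g.map (algebraMap S.val.valuationSubring F)) = 0 ∧
      w (π - β) * w (Polynomial.aeval α
          (Polynomial.derivative (g.map (algebraMap S.val.valuationSubring F))))
        ≤ w (Polynomial.aeval π (g.map (algebraMap S.val.valuationSubring F))) := by
  classical
  set G := g.map (algebraMap S.val.valuationSubring F)
  have hGm : G.Monic := hmon.map _
  have hdeg : 0 < g.natDegree := hmon.natDegree_pos.mpr fun h => by simp [G, h] at hα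
  have hGirr : Irreducible G := heis.irreducible_map_valuationSubring hmon hdeg
  have hαroots : α ∈ (G.aroots (AlgebraicClosure F)).toFinset := by
    simpa [Polynomial.mem_aroots, hGm.ne_zero] using hα
  obtain ⟨β, hβ, hmin⟩ := Finset.exists_min_image _ (fun r => w (π - r)) ⟨α, hαroots⟩
  have hβG : Polynomial.aeval β G = 0 := by
    simpa [Polynomial.mem_aroots, hGm.ne_zero] using hβ
  obtain ⟨σ, rfl⟩ := minpoly.exists_algEquiv_of_root' (Algebra.IsAlgebraic.isAlgebraic α)
    (by rwa [minpoly.eq_of_irreducible_of_monic hGirr hα hGm] at hβG)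
  refine ⟨σ α, hβG, ?_⟩
  have hconj : w (Polynomial.aeval (σ α) (Polynomial.derivative G)) =
      w (Polynomial.aeval α (Polynomial.derivative G)) := by
    rw [Polynomial.aeval_algEquiv, AlgHom.comp_apply, AlgEquiv.coe_toAlgHom,
      S.valuation_algEquiv_apply w hw]
  rw [← hconj]
  simpa [Polynomial.eval_map_algebraMap, Polynomial.derivative_map] using
    w.mul_eval_derivative_le_of_nearest_root (IsAlgClosed.splits (G.map (algebraMap F _)))
      (hGm.map _) (Multiset.mem_toFinset.mp hβ)
      (fun r hr => hmin r (Multiset.mem_toFinset.mpr hr))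

/-- **Lemma 3.3.**  Let `F` be a complete discretely valued field, `g ∈ O_F[T]` a
separable monic Eisenstein polynomial, `α` a root of `g` (generating `E = F(α)`),
and `d = v_E(g'(α))` the `E`-valuation of the different of `E/F`.  If `π` satisfies
`v_E(g(π)) > d`, then `g` has a root `β` with `v_E(π - β) ≥ v_E(g(π)) - d`.

Here `w` is the unique extension to the algebraic closure of the valuation of `F`;
the additive inequalities `v_E(g(π)) > d` and `v_E(π - β) ≥ v_E(g(π)) - d` are
scale-invariant and are expressed multiplicatively as `w(g(π)) < w(g'(α))` and
`w(π - β) · w(g'(α)) ≤ w(g(π))`. -/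
theorem statement_12
    (F : Type) [Field F] (S : CDVF F)
    (w : Valuation (AlgebraicClosure F) Qm0)
    (hw : ∀ x : F, w (algebraMap F (AlgebraicClosure F) x) = zToQ (S.val x))
    (g : Polynomial S.val.valuationSubring) (hmon : g.Monic)
    (heis : g.IsEisensteinAt (IsLocalRing.maximalIdeal S.val.valuationSubring))
    (hsep : (g.map (algebraMap S.val.valuationSubring F)).Separable)
    (α : AlgebraicClosure F)
    (hα : Polynomial.aeval α (g.map (algebraMap S.val.valuationSubring F)) = 0)
    (π : AlgebraicClosure F)
    (hπ : w (Polynomial.aeval π (g.map (algebraMap S.val.valuationSubring F)))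
        < w (Polynomial.aeval α
            (Polynomial.derivative (g.map (algebraMap S.val.valuationSubring F))))) :
    ∃ β : AlgebraicClosure F,
      Polynomial.aeval β (g.map (algebraMap S.val.valuationSubring F)) = 0 ∧
      w (π - β) * w (Polynomial.aeval α
          (Polynomial.derivative (g.map (algebraMap S.val.valuationSubring F))))
        ≤ w (Polynomial.aeval π (g.map (algebraMap S.val.valuationSubring F))) :=
  statement_12_general F S w hw g hmon heis α hα π

end FieldOfNormsPaper
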